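/- arXiv:1304.1832 — 2 statements merged into one kernel-verified Lean document; each statement's English description precedes it below -/
import Mathlib

section
/- Let p ≥ 5 be a prime. Then N_{φ(p-1)} ≥ (p+1)^{φ(p-1)/2}. -/
open Filter Real Finset

/-- A prime primitive root modulo `p`: a prime `ℓ` whose residue class has
multiplicative order `p - 1` in `(ℤ/pℤ)ˣ`. -/
def IsPrimePrimitiveRoot (p ℓ : ℕ) : Prop :=
  ℓ.Prime ∧ orderOf (ℓ : ZMod p) = p - 1

/-- `pprNth p t` is `x_t`, the `t`-th smallest prime primitive root modulo `p` (1-indexed). -/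
noncomputable def pprNth (p t : ℕ) : ℕ :=
  Nat.nth (IsPrimePrimitiveRoot p) (t - 1)

/-- `pprProd p t` is `N_t = x_1 ⋯ x_t`, with `N_0 = 1`. -/
noncomputable def pprProd (p t : ℕ) : ℕ :=
  ∏ i ∈ Finset.range t, Nat.nth (IsPrimePrimitiveRoot p) i

/-- `gstar p N` is `g*(p, N)`, the least prime primitive root modulo `p` not dividing `N`. -/
noncomputable def gstar (p N : ℕ) : ℕ :=
  sInf {ℓ : ℕ | IsPrimePrimitiveRoot p ℓ ∧ ¬ ℓ ∣ N}

/-- The generalized Riemann hypothesis for Dirichlet L-functions. -/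
def GRH : Prop :=
  ∀ (q : ℕ) [NeZero q] (χ : DirichletCharacter ℂ q) (s : ℂ),
    0 < s.re → s.re < 1 → DirichletCharacter.LFunction χ s = 0 → s.re = 1 / 2

/-- `primesCount a q x = π_{a,q}(x)`, the number of primes `ℓ ≤ x` with `ℓ ≡ a (mod q)`. -/
noncomputable def primesCount (a q : ℕ) (x : ℝ) : ℕ :=
  ((Finset.range (⌊x⌋₊ + 1)).filter fun ℓ => ℓ.Prime ∧ ℓ % q = a % q).card

/-!
Pair `x_i` with `x_j` for `i + j = φ(p - 1) + 1` (1-indexed). If `x_i x_j ≤ p`, then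
`x_1, …, x_j < p` and the inverses `x_1⁻¹, …, x_i⁻¹` modulo `p` all exceed `x_j` (since
`x_k · x_k⁻¹ ≡ 1` forces `x_k · x_k⁻¹ > p ≥ x_k x_j`), giving `i + j > φ(p - 1)` distinct primitive
roots modulo `p`, which is impossible. Hence each of the `φ(p - 1)` pairs has product at least
`p + 1`, and `N_{φ(p - 1)}²` is the product over all pairs.
-/

lemma card_le_totient_of_forall_orderOf_eq {R : Type*} [CommRing R] [IsDomain R] {k : ℕ}
    (hk : 0 < k) {F : Finset R} (hF : ∀ a ∈ F, orderOf a = k) : #F ≤ Nat.totient k := by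
  obtain rfl | ⟨a, ha⟩ := F.eq_empty_or_nonempty
  · simp
  calc #F ≤ #(primitiveRoots k R) := card_le_card fun b hb ↦
        (mem_primitiveRoots hk).2 (IsPrimitiveRoot.iff_orderOf.2 (hF b hb))
    _ = Nat.totient k := (IsPrimitiveRoot.iff_orderOf.2 (hF a ha)).card_primitiveRoots

lemma orderOf_inv₀ {G₀ : Type*} [GroupWithZero G₀] (a : G₀) : orderOf a⁻¹ = orderOf a := by
  simp [orderOf_eq_orderOf_iff, inv_pow, inv_eq_one]

lemma ZMod.card_image_natCast_of_lt {n : ℕ} {s : Finset ℕ} (hs : ∀ a ∈ s, a < n) :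
    #(s.image ((↑) : ℕ → ZMod n)) = #s :=
  card_image_of_injOn fun a ha b hb hab ↦ by
    simpa [ZMod.val_cast_of_lt (hs a ha), ZMod.val_cast_of_lt (hs b hb)] using
      congrArg ZMod.val hab

lemma ZMod.lt_val_inv_natCast {n a c : ℕ} (hn : 1 < n) (ha : 1 < a) (hcop : a.Coprime n)
    (hac : a * c ≤ n) : c < ((a : ZMod n)⁻¹).val := by
  have : NeZero n := ⟨by omega⟩
  set b := ((a : ZMod n)⁻¹).val
  have hmod : a * b % n = 1 := by
    have h := ZMod.coe_mul_inv_eq_one a hcop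
    rwa [← ZMod.natCast_zmod_val (a : ZMod n)⁻¹, ← Nat.cast_mul, ← Nat.cast_one,
      ZMod.natCast_eq_natCast_iff', Nat.one_mod_eq_one.2 hn.ne'] at h
  have hlt : n < a * b := by
    by_contra! hle
    rcases hle.lt_or_eq with hlt | heq
    · rw [Nat.mod_eq_of_lt hlt] at hmod
      have := Nat.eq_one_of_mul_eq_one_right hmod
      omega
    · rw [heq, Nat.mod_self] at hmod
      omega
  exact Nat.lt_of_mul_lt_mul_left (hac.trans_lt hlt)

lemma pow_le_sq_prod_range_of_le_mul_reflect {R : Type*} [CommSemiring R] [PartialOrder R]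
    [IsOrderedRing R] {f : ℕ → R} {c : R} {t : ℕ} (hc : 0 ≤ c)
    (h : ∀ i < t, c ≤ f i * f (t - 1 - i)) : c ^ t ≤ (∏ i ∈ range t, f i) ^ 2 := by
  calc c ^ t = ∏ _i ∈ range t, c := by rw [prod_const, card_range]
    _ ≤ ∏ i ∈ range t, f i * f (t - 1 - i) :=
        prod_le_prod (fun _ _ ↦ hc) fun i hi ↦ h i (mem_range.1 hi)
    _ = (∏ i ∈ range t, f i) ^ 2 := by rw [prod_mul_distrib, prod_range_reflect f t, sq]

section PrimePrimitiveRoot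

variable {p : ℕ}

lemma setOf_isPrimePrimitiveRoot_infinite (hp : p.Prime) :
    {ℓ | IsPrimePrimitiveRoot p ℓ}.Infinite := by
  have : Fact p.Prime := ⟨hp⟩
  obtain ⟨g, hg⟩ := IsCyclic.exists_ofOrder_eq_natCard (α := (ZMod p)ˣ)
  refine (Nat.infinite_setOfPred_prime_and_eq_mod g.isUnit).mono ?_
  rintro ℓ ⟨hℓ, hℓg⟩
  refine ⟨hℓ, ?_⟩
  rw [hℓg, orderOf_units, hg, Nat.card_eq_fintype_card, ZMod.card_units]

lemma add_two_le_totient_of_nth_mul_nth_le (hp : p.Prime) {i j : ℕ}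
    (hij : Nat.nth (IsPrimePrimitiveRoot p) i * Nat.nth (IsPrimePrimitiveRoot p) j ≤ p) :
    i + j + 2 ≤ Nat.totient (p - 1) := by
  have : Fact p.Prime := ⟨hp⟩
  set x := Nat.nth (IsPrimePrimitiveRoot p)
  have hinf := setOf_isPrimePrimitiveRoot_infinite hp
  have hmono : StrictMono x := Nat.nth_strictMono hinf
  have hppr k : IsPrimePrimitiveRoot p (x k) := Nat.nth_mem_of_infinite hinf k
  have hxi : x i < p := by nlinarith [(hppr i).1.two_le, (hppr j).1.two_le]
  have hxj : x j < p := by nlinarith [(hppr i).1.two_le, (hppr j).1.two_le]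
  set small := ((range (j + 1)).image x).image ((↑) : ℕ → ZMod p)
  set inverses := (((range (i + 1)).image x).image ((↑) : ℕ → ZMod p)).image (·⁻¹)
  have hlt {m} (hm : x m < p) : ∀ a ∈ (range (m + 1)).image x, a < p := by
    simp only [mem_image, mem_range]
    rintro _ ⟨k, hk, rfl⟩
    exact (hmono.monotone (Nat.le_of_lt_succ hk)).trans_lt hm
  have hsmall : #small = j + 1 := by
    rw [ZMod.card_image_natCast_of_lt (hlt hxj), card_image_of_injective _ hmono.injective,
      card_range]
  have hinverses : #inverses = i + 1 := by
    rw [card_image_of_injective _ inv_injective, ZMod.card_image_natCast_of_lt (hlt hxi),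
      card_image_of_injective _ hmono.injective, card_range]
  have hdisj : Disjoint small inverses := by
    simp only [disjoint_left, small, inverses, mem_image, mem_range]
    rintro _ ⟨_, ⟨k, hk, rfl⟩, rfl⟩ ⟨_, ⟨_, ⟨l, hl, rfl⟩, rfl⟩, heq⟩
    have hxk : (x k : ZMod p).val ≤ x j := by
      rw [ZMod.val_cast_of_lt (hlt hxj _ (mem_image_of_mem x (mem_range.2 hk)))]
      exact hmono.monotone (Nat.le_of_lt_succ hk)
    have hxl : x l ≤ x i := hmono.monotone (Nat.le_of_lt_succ hl)
    have hinv : x j < ((x l : ZMod p)⁻¹).val :=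
      ZMod.lt_val_inv_natCast hp.one_lt (hppr l).1.one_lt
        ((Nat.coprime_primes (hppr l).1 hp).2 (by omega))
        ((Nat.mul_le_mul_right _ hxl).trans hij)
    rw [heq] at hinv
    omega
  have horder : ∀ a ∈ small ∪ inverses, orderOf a = p - 1 := by
    simp only [mem_union, small, inverses, mem_image]
    rintro _ (⟨_, ⟨k, -, rfl⟩, rfl⟩ | ⟨_, ⟨_, ⟨k, -, rfl⟩, rfl⟩, rfl⟩)
    · exact (hppr k).2
    · rw [orderOf_inv₀]
      exact (hppr k).2
  calc i + j + 2 = #(small ∪ inverses) := by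
        rw [card_union_of_disjoint hdisj, hsmall, hinverses]
        ring
    _ ≤ Nat.totient (p - 1) :=
        card_le_totient_of_forall_orderOf_eq (Nat.sub_pos_of_lt hp.one_lt) horder

lemma pow_totient_le_sq_pprProd (hp : p.Prime) :
    (p + 1) ^ Nat.totient (p - 1) ≤ pprProd p (Nat.totient (p - 1)) ^ 2 :=
  pow_le_sq_prod_range_of_le_mul_reflect (Nat.zero_le _) fun i hi ↦ by
    by_contra! h
    have := add_two_le_totient_of_nth_mul_nth_le hp (Nat.le_of_lt_succ h)
    omega

end PrimePrimitiveRoot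

theorem pprProd_totient_lower_bound_general (p : ℕ) (hp : p.Prime) :
    ((p : ℝ) + 1) ^ ((Nat.totient (p - 1) : ℝ) / 2)
      ≤ (pprProd p (Nat.totient (p - 1)) : ℝ) := by
  have hsq : ((p : ℝ) + 1) ^ Nat.totient (p - 1) ≤ (pprProd p (Nat.totient (p - 1)) : ℝ) ^ 2 := by
    exact_mod_cast pow_totient_le_sq_pprProd hp
  rw [Real.rpow_div_two_eq_sqrt _ (by positivity), Real.rpow_natCast]
  refine le_of_pow_le_pow_left₀ two_ne_zero (by positivity) ?_
  rwa [← pow_mul, mul_comm, pow_mul, Real.sq_sqrt (by positivity)]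

theorem pprProd_totient_lower_bound (p : ℕ) (hp : p.Prime) (hp5 : 5 ≤ p) :
    ((p : ℝ) + 1) ^ ((Nat.totient (p - 1) : ℝ) / 2)
      ≤ (pprProd p (Nat.totient (p - 1)) : ℝ) :=
  pprProd_totient_lower_bound_general p hp
end

section
/- Let p ≥ 5 be a prime, let t be a positive integer, and let N be a positive integer with N ≥ 12·x_t². Suppose that 12·g*(p,N)² > N·∏_{ℓ|N, ℓ prime}(1 + 1/ℓ). Then N_t divides N. -/
open Filter Real Finset

/-!
If some `x_i` with `i ≤ t` did not divide `N`, then `g*(p, N) ≤ x_i ≤ x_t`, so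
`12 g*(p, N)² ≤ 12 x_t² ≤ N ≤ N ∏_{ℓ ∣ N} (1 + 1/ℓ)`, contradicting the hypothesis.
Hence `x_1, …, x_t` all divide `N`, and being distinct primes, so does their product.
-/

/-- Dirichlet's theorem applied to the residue class of a generator of `(ℤ/pℤ)ˣ`. -/
theorem infinite_setOf_isPrimePrimitiveRoot {p : ℕ} (hp : p.Prime) :
    {ℓ | IsPrimePrimitiveRoot p ℓ}.Infinite := by
  have : Fact p.Prime := ⟨hp⟩
  obtain ⟨g, hg⟩ := IsCyclic.exists_ofOrder_eq_natCard (α := (ZMod p)ˣ)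
  have hg_order : orderOf g = p - 1 := by
    rw [hg, Nat.card_eq_fintype_card, ZMod.card_units_eq_totient, Nat.totient_prime hp]
  refine (Nat.infinite_setOfPred_prime_and_eq_mod g.isUnit).mono ?_
  rintro ℓ ⟨hℓ, hℓg⟩
  exact ⟨hℓ, by rw [hℓg, orderOf_units, hg_order]⟩

theorem gstar_le {p N ℓ : ℕ} (hℓ : IsPrimePrimitiveRoot p ℓ) (hℓN : ¬ ℓ ∣ N) :
    gstar p N ≤ ℓ :=
  Nat.sInf_le ⟨hℓ, hℓN⟩

theorem one_le_prod_one_add_inv (s : Finset ℕ) : (1 : ℝ) ≤ ∏ ℓ ∈ s, (1 + 1 / (ℓ : ℝ)) :=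
  Finset.one_le_prod fun _ _ => le_add_of_nonneg_right (by positivity)

theorem Nat.prod_range_nth_dvd {P : ℕ → Prop} (hprime : ∀ n, P n → n.Prime)
    (hinf : {n | P n}.Infinite) {t N : ℕ} (hdvd : ∀ i < t, Nat.nth P i ∣ N) :
    ∏ i ∈ range t, Nat.nth P i ∣ N := by
  rw [← Finset.prod_image (f := fun ℓ => ℓ) fun i _ j _ hij => Nat.nth_injective hinf hij]
  refine Finset.prod_primes_dvd N (fun ℓ hℓ => ?_) (fun ℓ hℓ => ?_) <;>
    obtain ⟨i, hi, rfl⟩ := Finset.mem_image.mp hℓ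
  · exact (hprime _ (Nat.nth_mem_of_infinite hinf i)).prime
  · exact hdvd i (Finset.mem_range.mp hi)

theorem pprProd_dvd_of_comp_fails_general (p : ℕ) (hp : p.Prime)
    (t : ℕ) (N : ℕ) (hN : 12 * pprNth p t ^ 2 ≤ N)
    (hfail : (N : ℝ) * ∏ ℓ ∈ N.primeFactors, (1 + 1 / (ℓ : ℝ)) < 12 * (gstar p N : ℝ) ^ 2) :
    pprProd p t ∣ N := by
  have hinf := infinite_setOf_isPrimePrimitiveRoot hp
  refine Nat.prod_range_nth_dvd (fun _ hℓ => hℓ.1) hinf fun i hi => ?_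
  by_contra hndvd
  have hg : gstar p N ≤ pprNth p t :=
    (gstar_le (Nat.nth_mem_of_infinite hinf i) hndvd).trans (Nat.nth_monotone hinf (by omega))
  have hgN : 12 * (gstar p N : ℝ) ^ 2 ≤ N := by
    exact_mod_cast (Nat.mul_le_mul_left 12 (Nat.pow_le_pow_left hg 2)).trans hN
  have hNprod : (N : ℝ) ≤ N * ∏ ℓ ∈ N.primeFactors, (1 + 1 / (ℓ : ℝ)) :=
    le_mul_of_one_le_right (Nat.cast_nonneg N) (one_le_prod_one_add_inv _)
  linarith

theorem pprProd_dvd_of_comp_fails (p : ℕ) (hp : p.Prime) (hp5 : 5 ≤ p)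
    (t : ℕ) (ht : 0 < t) (N : ℕ) (hN0 : 0 < N) (hN : 12 * pprNth p t ^ 2 ≤ N)
    (hfail : (N : ℝ) * ∏ ℓ ∈ N.primeFactors, (1 + 1 / (ℓ : ℝ)) < 12 * (gstar p N : ℝ) ^ 2) :
    pprProd p t ∣ N :=
  pprProd_dvd_of_comp_fails_general p hp t N hN hfail
end
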